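/- arXiv:1407.2436 — 3 statements merged into one kernel-verified Lean document; each statement's English description precedes it below -/
import Mathlib

section
/- For λ > 0 there exists a constant C > 0 such that |D_{λ,x} P_t^λ(x,y)| ≤ C / ((x-y)² + t²) for all x, y, t ∈ (0,∞). -/
/-!
Write `D = (x - y)² + t²` and `A(θ) = D + 2xy(1 - cos θ)`. Since `t |x - y cos θ| ≤ 4 A(θ)`, it
suffices to bound `(xy)^λ ∫₀^π sin^{2λ-1} θ / A(θ)^{λ+1} dθ` by a multiple of `1/D`.
With `u = 2xy(1 - cos θ)` and `sin² θ = (1 - cos θ)(1 + cos θ)`, the integrand times `2λD(xy)^λ`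
is `((1 + cos θ)/2)^{λ-1}` times the derivative of `(u/(D + u))^λ`. The weight is bounded where
`cos θ ≥ 0`, and where `cos θ < 0` the product is dominated by the derivative of
`-(1 + cos θ)^λ`. Both functions take values in a fixed bounded interval, so the integral is
`O(1/D)` by the fundamental theorem of calculus.
-/

open MeasureTheory Real Set

/-- The Bessel–Poisson kernel `P_t^λ(x,y)`. -/
noncomputable def besselPoissonKernel (l x y t : ℝ) : ℝ :=
  2 * l * (x * y) ^ l * t / π *
    ∫ θ in (0:ℝ)..π, Real.sin θ ^ (2 * l - 1) /
      ((x - y) ^ 2 + t ^ 2 + 2 * x * y * (1 - Real.cos θ)) ^ (l + 1)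

/-- `D_{λ,x} P_t^λ(x,y)`, where `D_λ = x^λ ∂_x x^{-λ}`. -/
noncomputable def DxBesselPoissonKernel (l x y t : ℝ) : ℝ :=
  -(4 * l * (l + 1) / π) * (x * y) ^ l * t *
    ∫ θ in (0:ℝ)..π, Real.sin θ ^ (2 * l - 1) * (x - y * Real.cos θ) /
      ((x - y) ^ 2 + t ^ 2 + 2 * x * y * (1 - Real.cos θ)) ^ (l + 2)

section
variable {f g g' : ℝ → ℝ} {a b : ℝ}

theorem intervalIntegrable_of_nonneg_of_le_deriv (hab : a ≤ b)
    (hcont : ContinuousOn g (Icc a b)) (hderiv : ∀ x ∈ Ioo a b, HasDerivAt g (g' x) x)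
    (hf : AEStronglyMeasurable f (volume.restrict (Ioc a b)))
    (hf0 : ∀ x ∈ Ioo a b, 0 ≤ f x) (hfg : ∀ x ∈ Ioo a b, f x ≤ g' x) :
    IntervalIntegrable f volume a b := by
  have hg' : IntegrableOn g' (Ioc a b) :=
    intervalIntegral.integrableOn_deriv_of_nonneg hcont hderiv fun x hx =>
      (hf0 x hx).trans (hfg x hx)
  refine (intervalIntegrable_iff_integrableOn_Ioc_of_le hab).2 (hg'.mono' hf ?_)
  rw [ae_restrict_congr_set Ioo_ae_eq_Ioc.symm]
  refine ae_restrict_of_forall_mem measurableSet_Ioo fun x hx => ?_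
  rw [Real.norm_of_nonneg (hf0 x hx)]
  exact hfg x hx

theorem integral_le_sub_of_nonneg_of_le_deriv (hab : a ≤ b)
    (hcont : ContinuousOn g (Icc a b)) (hderiv : ∀ x ∈ Ioo a b, HasDerivAt g (g' x) x)
    (hf : AEStronglyMeasurable f (volume.restrict (Ioc a b)))
    (hf0 : ∀ x ∈ Ioo a b, 0 ≤ f x) (hfg : ∀ x ∈ Ioo a b, f x ≤ g' x) :
    ∫ x in a..b, f x ≤ g b - g a :=
  intervalIntegral.integral_le_sub_of_hasDeriv_right_of_le hab hcont
    (fun x hx => (hderiv x hx).hasDerivWithinAt)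
    ((intervalIntegrable_iff_integrableOn_Icc_of_le hab).1
      (intervalIntegrable_of_nonneg_of_le_deriv hab hcont hderiv hf hf0 hfg)) hfg

end

lemma rpow_le_max_one_two_rpow {w p : ℝ} (hw₁ : 1 / 2 ≤ w) (hw₂ : w ≤ 1) :
    w ^ p ≤ max 1 (2 ^ (-p)) := by
  rcases le_total 0 p with hp | hp
  · exact (rpow_le_one (by linarith) hw₂ hp).trans (le_max_left _ _)
  · refine (rpow_le_rpow_of_nonpos (by norm_num) hw₁ hp).trans
      (le_of_eq_of_le ?_ (le_max_right _ _))
    rw [one_div, inv_rpow zero_le_two, rpow_neg zero_le_two]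

lemma cos_mem_Ioo_of_mem_Ioo {θ : ℝ} (hθ : θ ∈ Ioo 0 π) : cos θ ∈ Ioo (-1) 1 := by
  constructor
  · simpa using cos_lt_cos_of_nonneg_of_le_pi hθ.1.le le_rfl hθ.2
  · simpa using cos_lt_cos_of_nonneg_of_le_pi le_rfl hθ.2.le hθ.1

noncomputable def besselIntegrand (l D b θ : ℝ) : ℝ :=
  sin θ ^ (2 * l - 1) / (D + 2 * b * (1 - cos θ)) ^ (l + 1)

noncomputable def besselRatio (D b θ : ℝ) : ℝ :=
  2 * b * (1 - cos θ) / (D + 2 * b * (1 - cos θ))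

noncomputable def besselPrimitive (l D b θ : ℝ) : ℝ :=
  besselRatio D b θ ^ l - (1 + cos θ) ^ l

section
variable {l D b : ℝ}

lemma besselRatio_nonneg (hD : 0 < D) (hb : 0 < b) (θ : ℝ) : 0 ≤ besselRatio D b θ := by
  have : 0 ≤ 1 - cos θ := by linarith [cos_le_one θ]
  unfold besselRatio; positivity

lemma besselRatio_le_one (hD : 0 < D) (hb : 0 < b) (θ : ℝ) : besselRatio D b θ ≤ 1 := by
  have : 0 ≤ 1 - cos θ := by linarith [cos_le_one θ]
  rw [besselRatio, div_le_one (by positivity)]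
  linarith

lemma continuous_besselPrimitive (hl : 0 < l) (hD : 0 < D) (hb : 0 < b) :
    Continuous (besselPrimitive l D b) := by
  have hA : ∀ θ, D + 2 * b * (1 - cos θ) ≠ 0 := fun θ => by
    have : 0 ≤ 1 - cos θ := by linarith [cos_le_one θ]
    positivity
  have hr : Continuous (besselRatio D b) := by unfold besselRatio; fun_prop (disch := exact hA _)
  exact (hr.rpow_const fun _ => Or.inr hl.le).sub
    ((continuous_const.add continuous_cos).rpow_const fun _ => Or.inr hl.le)

lemma besselPrimitive_mem_Icc (hl : 0 < l) (hD : 0 < D) (hb : 0 < b) (θ : ℝ) :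
    besselPrimitive l D b θ ∈ Icc (-2 ^ l) 1 := by
  have hp₀ : 0 ≤ 1 + cos θ := by linarith [neg_one_le_cos θ]
  have hp₂ : 1 + cos θ ≤ 2 := by linarith [cos_le_one θ]
  have hr₀ := besselRatio_nonneg hD hb θ
  constructor
  · have := rpow_le_rpow hp₀ hp₂ hl.le
    have := rpow_nonneg hr₀ l
    rw [besselPrimitive]; linarith
  · have := rpow_le_one hr₀ (besselRatio_le_one hD hb θ) hl.le
    have := rpow_nonneg hp₀ l
    rw [besselPrimitive]; linarith

lemma hasDerivAt_besselPrimitive (hD : 0 < D) (hb : 0 < b) {θ : ℝ} (hθ : θ ∈ Ioo 0 π) :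
    HasDerivAt (besselPrimitive l D b)
      (l * besselRatio D b θ ^ (l - 1) * (2 * b * D * sin θ / (D + 2 * b * (1 - cos θ)) ^ 2) +
        l * (1 + cos θ) ^ (l - 1) * sin θ) θ := by
  obtain ⟨hc₁, hc₂⟩ := cos_mem_Ioo_of_mem_Ioo hθ
  have hq : 0 < 2 * b * (1 - cos θ) := by nlinarith
  have hA : 0 < D + 2 * b * (1 - cos θ) := by linarith
  have hq' : HasDerivAt (fun θ => 2 * b * (1 - cos θ)) (2 * b * sin θ) θ := by
    simpa using ((hasDerivAt_cos θ).const_sub 1).const_mul (2 * b)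
  have hr := (hq'.div ((hasDerivAt_const θ D).add hq') hA.ne').rpow_const
    (p := l) (Or.inl (div_pos hq hA).ne')
  have hp := ((hasDerivAt_cos θ).const_add 1).rpow_const (p := l)
    (Or.inl (by linarith : 1 + cos θ ≠ 0))
  refine (hr.sub hp).congr_deriv ?_
  simp only [Pi.div_apply, Pi.add_apply, besselRatio]
  field_simp
  ring

lemma two_mul_rpow_mul_besselIntegrand_eq (hD : 0 < D) (hb : 0 < b) {θ : ℝ}
    (hθ : θ ∈ Ioo 0 π) :
    2 * l * D * b ^ l * besselIntegrand l D b θ = ((1 + cos θ) / 2) ^ (l - 1) *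
      (l * besselRatio D b θ ^ (l - 1) * (2 * b * D * sin θ / (D + 2 * b * (1 - cos θ)) ^ 2)) := by
  obtain ⟨hc₁, hc₂⟩ := cos_mem_Ioo_of_mem_Ioo hθ
  have hs : 0 < sin θ := sin_pos_of_pos_of_lt_pi hθ.1 hθ.2
  have hq : 0 < 1 - cos θ := by linarith
  have hp : 0 < 1 + cos θ := by linarith
  have hA : 0 < D + 2 * b * (1 - cos θ) := by positivity
  set A := D + 2 * b * (1 - cos θ)
  have hsin : sin θ ^ (2 * l - 1) = (1 - cos θ) ^ (l - 1) * (1 + cos θ) ^ (l - 1) * sin θ := by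
    rw [← mul_rpow hq.le hp.le, show (1 - cos θ) * (1 + cos θ) = sin θ ^ (2 : ℝ) by
      rw [rpow_two, sin_sq]; ring, ← rpow_mul hs.le, ← rpow_add_one hs.ne']
    ring_nf
  rw [besselIntegrand, besselRatio, hsin, div_rpow (by positivity) hA.le,
    mul_rpow (by positivity) hq.le, mul_rpow zero_le_two hb.le, div_rpow hp.le zero_le_two,
    show l + 1 = (l - 1) + 2 by ring, rpow_add hA, rpow_two,
    show b ^ l = b ^ (l - 1) * b by rw [← rpow_add_one hb.ne']; ring_nf]
  have : (0:ℝ) < 2 ^ (l - 1) := by positivity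
  have : 0 < A ^ (l - 1) := by positivity
  field_simp

lemma rpow_besselRatio_mul_le_one (hl : 0 < l) (hD : 0 < D) (hb : 0 < b) {θ : ℝ}
    (hcos : cos θ ≤ 0) :
    besselRatio D b θ ^ (l - 1) * (2 * b * D / (D + 2 * b * (1 - cos θ)) ^ 2) ≤ 1 := by
  have hq : 0 < 1 - cos θ := by linarith
  have hA : 0 < D + 2 * b * (1 - cos θ) := by positivity
  have hr : 0 < besselRatio D b θ := by unfold besselRatio; positivity
  have hrl : besselRatio D b θ ^ l ≤ 1 := rpow_le_one hr.le (besselRatio_le_one hD hb θ) hl.le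
  rw [rpow_sub_one hr.ne']
  calc besselRatio D b θ ^ l / besselRatio D b θ * (2 * b * D / (D + 2 * b * (1 - cos θ)) ^ 2)
      = besselRatio D b θ ^ l * (D / ((1 - cos θ) * (D + 2 * b * (1 - cos θ)))) := by
        unfold besselRatio; field_simp
    _ ≤ 1 * 1 := by
        gcongr
        rw [div_le_one (by positivity)]
        nlinarith
    _ = 1 := one_mul 1

lemma two_mul_rpow_mul_besselIntegrand_le (hl : 0 < l) (hD : 0 < D) (hb : 0 < b) {θ : ℝ}
    (hθ : θ ∈ Ioo 0 π) :
    2 * l * D * b ^ l * besselIntegrand l D b θ ≤ max 1 (2 ^ (1 - l)) *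
      (l * besselRatio D b θ ^ (l - 1) * (2 * b * D * sin θ / (D + 2 * b * (1 - cos θ)) ^ 2) +
        l * (1 + cos θ) ^ (l - 1) * sin θ) := by
  obtain ⟨hc₁, hc₂⟩ := cos_mem_Ioo_of_mem_Ioo hθ
  have hs : 0 < sin θ := sin_pos_of_pos_of_lt_pi hθ.1 hθ.2
  have hr := besselRatio_nonneg hD hb θ
  set F' := l * besselRatio D b θ ^ (l - 1) * (2 * b * D * sin θ / (D + 2 * b * (1 - cos θ)) ^ 2)
  set G' := l * (1 + cos θ) ^ (l - 1) * sin θ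
  have hF' : 0 ≤ F' := by positivity
  have hp : 0 < 1 + cos θ := by linarith
  have hG' : 0 ≤ G' := by positivity
  rw [two_mul_rpow_mul_besselIntegrand_eq hD hb hθ]
  rcases le_total 0 (cos θ) with hcos | hcos
  · have : ((1 + cos θ) / 2) ^ (l - 1) ≤ max 1 (2 ^ (1 - l)) := by
      simpa using rpow_le_max_one_two_rpow (p := l - 1) (by linarith) (by linarith)
    nlinarith [rpow_nonneg (by positivity : (0:ℝ) ≤ (1 + cos θ) / 2) (l - 1)]
  · have hF'G' : F' ≤ l * sin θ := by
      have := rpow_besselRatio_mul_le_one hl hD hb hcos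
      calc F' = l * sin θ * (besselRatio D b θ ^ (l - 1) *
            (2 * b * D / (D + 2 * b * (1 - cos θ)) ^ 2)) := by ring
        _ ≤ l * sin θ * 1 := by gcongr
        _ = l * sin θ := mul_one _
    have : ((1 + cos θ) / 2) ^ (l - 1) = 2 ^ (1 - l) * (1 + cos θ) ^ (l - 1) := by
      rw [div_rpow hp.le zero_le_two, div_eq_mul_inv, ← rpow_neg zero_le_two]
      ring_nf
    calc ((1 + cos θ) / 2) ^ (l - 1) * F'
        ≤ 2 ^ (1 - l) * (1 + cos θ) ^ (l - 1) * (l * sin θ) := by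
          rw [this]; gcongr
      _ = 2 ^ (1 - l) * G' := by ring
      _ ≤ max 1 (2 ^ (1 - l)) * (F' + G') := by
          gcongr
          · exact le_max_right _ _
          · linarith

lemma besselIntegrand_le_deriv (hl : 0 < l) (hD : 0 < D) (hb : 0 < b) {θ : ℝ}
    (hθ : θ ∈ Ioo 0 π) :
    besselIntegrand l D b θ ≤ max 1 (2 ^ (1 - l)) / (2 * l * D * b ^ l) *
      (l * besselRatio D b θ ^ (l - 1) * (2 * b * D * sin θ / (D + 2 * b * (1 - cos θ)) ^ 2) +
        l * (1 + cos θ) ^ (l - 1) * sin θ) := by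
  rw [div_mul_eq_mul_div, le_div_iff₀ (by positivity), mul_comm]
  exact two_mul_rpow_mul_besselIntegrand_le hl hD hb hθ

lemma besselIntegrand_nonneg (hD : 0 ≤ D) (hb : 0 ≤ b) {θ : ℝ} (hθ : θ ∈ Icc 0 π) :
    0 ≤ besselIntegrand l D b θ := by
  have := sin_nonneg_of_nonneg_of_le_pi hθ.1 hθ.2
  have : 0 ≤ 1 - cos θ := by linarith [cos_le_one θ]
  unfold besselIntegrand; positivity

lemma measurable_besselIntegrand (l D b : ℝ) : Measurable (besselIntegrand l D b) := by
  unfold besselIntegrand; fun_prop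

theorem intervalIntegrable_besselIntegrand (hl : 0 < l) (hD : 0 < D) (hb : 0 < b) :
    IntervalIntegrable (besselIntegrand l D b) volume 0 π :=
  intervalIntegrable_of_nonneg_of_le_deriv pi_pos.le
    (continuous_const.mul (continuous_besselPrimitive hl hD hb)).continuousOn
    (fun _ hθ => (hasDerivAt_besselPrimitive hD hb hθ).const_mul _)
    (measurable_besselIntegrand l D b).aestronglyMeasurable
    (fun _ hθ => besselIntegrand_nonneg hD.le hb.le (Ioo_subset_Icc_self hθ))
    (fun _ hθ => besselIntegrand_le_deriv hl hD hb hθ)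

theorem rpow_mul_integral_besselIntegrand_le (hl : 0 < l) (hD : 0 < D) (hb : 0 < b) :
    b ^ l * ∫ θ in 0..π, besselIntegrand l D b θ ≤
      max 1 (2 ^ (1 - l)) * (1 + 2 ^ l) / (2 * l) / D := by
  have h := integral_le_sub_of_nonneg_of_le_deriv pi_pos.le
    (continuous_const.mul (continuous_besselPrimitive hl hD hb)).continuousOn
    (fun _ hθ => (hasDerivAt_besselPrimitive hD hb hθ).const_mul _)
    (measurable_besselIntegrand l D b).aestronglyMeasurable
    (fun _ hθ => besselIntegrand_nonneg hD.le hb.le (Ioo_subset_Icc_self hθ))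
    (fun _ hθ => besselIntegrand_le_deriv hl hD hb hθ)
  simp only [Pi.mul_apply] at h
  have hπ := (besselPrimitive_mem_Icc hl hD hb π).2
  have h₀ := (besselPrimitive_mem_Icc hl hD hb 0).1
  have hc : 0 ≤ max 1 (2 ^ (1 - l)) / (2 * l * D * b ^ l) :=
    div_nonneg (zero_le_one.trans (le_max_left _ _)) (by positivity)
  calc b ^ l * ∫ θ in 0..π, besselIntegrand l D b θ
      ≤ b ^ l * (max 1 (2 ^ (1 - l)) / (2 * l * D * b ^ l) * (1 + 2 ^ l)) := by
        gcongr
        nlinarith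
    _ = max 1 (2 ^ (1 - l)) * (1 + 2 ^ l) / (2 * l) / D := by
        have : 0 < b ^ l := by positivity
        field_simp

end

lemma mul_abs_sub_mul_le {x y t c : ℝ} (hx : 0 ≤ x) (hy : 0 ≤ y) (ht : 0 ≤ t)
    (hc₁ : -1 ≤ c) (hc₂ : c ≤ 1) :
    t * |x - y * c| ≤ 4 * ((x - y) ^ 2 + t ^ 2 + 2 * x * y * (1 - c)) := by
  have hp : 0 ≤ 1 + c := by linarith
  have hq : 0 ≤ 1 - c := by linarith
  have hy2 : y ^ 2 * (1 - c) ^ 2 ≤ 6 * ((x - y) ^ 2 + 2 * x * y * (1 - c)) := by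
    nlinarith [mul_nonneg (sq_nonneg (2 * x - y)) hq, mul_nonneg (sq_nonneg (x - y)) hp,
      mul_nonneg (mul_nonneg (sq_nonneg y) hq) hp, mul_nonneg (mul_nonneg hx hy) hq]
  have h1 : t * |x - y| ≤ ((x - y) ^ 2 + t ^ 2) / 2 := by
    nlinarith [sq_nonneg (t - |x - y|), sq_abs (x - y)]
  have h2 : t * (y * (1 - c)) ≤ (t ^ 2 + y ^ 2 * (1 - c) ^ 2) / 2 := by
    nlinarith [sq_nonneg (t - y * (1 - c))]
  have h3 : 0 ≤ x * y * (1 - c) := mul_nonneg (mul_nonneg hx hy) hq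
  calc t * |x - y * c| = t * |(x - y) + y * (1 - c)| := by ring_nf
    _ ≤ t * (|x - y| + y * (1 - c)) := by
        gcongr
        exact (abs_add_le _ _).trans_eq (by rw [abs_of_nonneg (mul_nonneg hy hq)])
    _ ≤ _ := by nlinarith

lemma abs_DxBesselPoissonIntegrand_le {l x y t θ : ℝ} (hx : 0 ≤ x) (hy : 0 ≤ y) (ht : 0 < t)
    (hθ : θ ∈ Icc 0 π) :
    |sin θ ^ (2 * l - 1) * (x - y * cos θ) /
        ((x - y) ^ 2 + t ^ 2 + 2 * x * y * (1 - cos θ)) ^ (l + 2)| ≤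
      4 / t * besselIntegrand l ((x - y) ^ 2 + t ^ 2) (x * y) θ := by
  have hq : 0 ≤ 1 - cos θ := by linarith [cos_le_one θ]
  have hA : 0 < (x - y) ^ 2 + t ^ 2 + 2 * x * y * (1 - cos θ) := by positivity
  have hs : 0 ≤ sin θ ^ (2 * l - 1) := rpow_nonneg (sin_nonneg_of_nonneg_of_le_pi hθ.1 hθ.2) _
  have hb := mul_abs_sub_mul_le hx hy ht.le (neg_one_le_cos θ) (cos_le_one θ)
  rw [besselIntegrand, ← mul_assoc, abs_div, abs_mul, abs_of_nonneg hs,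
    abs_of_pos (rpow_pos_of_pos hA _), show l + 2 = (l + 1) + 1 by ring, rpow_add_one hA.ne',
    div_le_iff₀ (by positivity)]
  set A := (x - y) ^ 2 + t ^ 2 + 2 * x * y * (1 - cos θ)
  have : 0 < A ^ (l + 1) := by positivity
  calc sin θ ^ (2 * l - 1) * |x - y * cos θ|
        = sin θ ^ (2 * l - 1) * (t * |x - y * cos θ|) / t := by field_simp
    _ ≤ sin θ ^ (2 * l - 1) * (4 * A) / t := by gcongr
    _ = _ := by field_simp

lemma abs_integral_DxBesselPoissonIntegrand_le {l x y t : ℝ} (hl : 0 < l) (hx : 0 < x)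
    (hy : 0 < y) (ht : 0 < t) :
    |∫ θ in (0:ℝ)..π, sin θ ^ (2 * l - 1) * (x - y * cos θ) /
        ((x - y) ^ 2 + t ^ 2 + 2 * x * y * (1 - cos θ)) ^ (l + 2)|
      ≤ 4 / t * ∫ θ in (0:ℝ)..π, besselIntegrand l ((x - y) ^ 2 + t ^ 2) (x * y) θ := by
  have hk := intervalIntegrable_besselIntegrand hl (by positivity : 0 < (x - y) ^ 2 + t ^ 2)
    (mul_pos hx hy)
  rw [← Real.norm_eq_abs, ← intervalIntegral.integral_const_mul]
  refine intervalIntegral.norm_integral_le_of_norm_le pi_pos.le ?_ (hk.const_mul _)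
  exact Filter.Eventually.of_forall fun θ hθ =>
    abs_DxBesselPoissonIntegrand_le hx.le hy.le ht (Ioc_subset_Icc_self hθ)

/-- For `λ > 0`, `|D_{λ,x}P_t^λ(x,y)| ≤ C/((x-y)² + t²)` for all `x,y,t ∈ (0,∞)`. -/
theorem statement1 (l : ℝ) (hl : 0 < l) :
    ∃ C > 0, ∀ x y t : ℝ, 0 < x → 0 < y → 0 < t →
      |DxBesselPoissonKernel l x y t| ≤ C / ((x - y) ^ 2 + t ^ 2) := by
  set K := max 1 (2 ^ (1 - l)) * (1 + 2 ^ l) / (2 * l)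
  have hc : 0 < 4 * l * (l + 1) / π := by positivity
  refine ⟨4 * l * (l + 1) / π * 4 * K, by positivity, fun x y t hx hy ht => ?_⟩
  set D := (x - y) ^ 2 + t ^ 2
  set I := ∫ θ in (0:ℝ)..π, besselIntegrand l D (x * y) θ
  have hxy : 0 < (x * y) ^ l := by positivity
  rw [DxBesselPoissonKernel, abs_mul, abs_mul, abs_mul, abs_neg, abs_of_pos hc, abs_of_pos hxy,
    abs_of_pos ht]
  calc 4 * l * (l + 1) / π * (x * y) ^ l * t * |∫ θ in (0:ℝ)..π, _|
      ≤ 4 * l * (l + 1) / π * (x * y) ^ l * t * (4 / t * I) := by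
        gcongr
        exact abs_integral_DxBesselPoissonIntegrand_le hl hx hy ht
    _ = 4 * l * (l + 1) / π * 4 * ((x * y) ^ l * I) := by field_simp
    _ ≤ 4 * l * (l + 1) / π * 4 * (K / D) := by
        gcongr
        exact rpow_mul_integral_besselIntegrand_le hl (by positivity) (mul_pos hx hy)
    _ = 4 * l * (l + 1) / π * 4 * K / D := by ring
end

section
/- Let λ > 1. If v is bounded and continuous on (0,∞) × [0,∞), λ-harmonic on (0,∞) × (0,∞), and v(x,0) = 0 for all x ∈ (0,∞), then v ≡ 0 on (0,∞) × [0,∞). -/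
/-!
Maximum principle with the barrier `w(x,t) = x^λ + x^(1-λ) + t`. The function `x^λ + x^(1-λ)`
is λ-harmonic and `t` is harmonic, so `∂ₜ²w + ∂ₓ²w ≤ λ(λ-1)x⁻²w`; since `λ > 1`, `w → ∞` as
`x → 0`, `x → ∞` or `t → ∞`. For `ε > 0` the bounded function `v - εw` is therefore negative near
those ends of the quarter plane and `≤ 0` on `t = 0`, and at an interior positive maximum the
second-derivative test contradicts the equation. Applied to `±v` this gives `|v| ≤ εw` for every
`ε > 0`, hence `v = 0`.
-/

open Real Set Filter Topology

theorem IsLocalMax.deriv_deriv_nonpos {f : ℝ → ℝ} {a : ℝ} (h : IsLocalMax f a)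
    (hc : ContinuousAt f a) : deriv (deriv f) a ≤ 0 := by
  by_contra! hpos
  have hconst : f =ᶠ[𝓝 a] fun _ => f a :=
    (h.and (isLocalMin_of_deriv_deriv_pos hpos h.deriv_eq_zero hc)).mono
      fun _ hx => le_antisymm hx.1 hx.2
  refine hpos.ne' ?_
  rw [hconst.deriv.deriv_eq]
  simp

theorem ContDiffOn.eventually_differentiableAt {f : ℝ → ℝ} {s : Set ℝ} {a : ℝ}
    (hf : ContDiffOn ℝ 2 f s) (hs : IsOpen s) (ha : a ∈ s) :
    ∀ᶠ x in 𝓝 a, DifferentiableAt ℝ f x :=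
  eventually_of_mem (hs.mem_nhds ha) fun _ hx =>
    (hf.differentiableOn (by norm_num)).differentiableAt (hs.mem_nhds hx)

theorem ContDiffOn.differentiableAt_deriv {f : ℝ → ℝ} {s : Set ℝ} {a : ℝ}
    (hf : ContDiffOn ℝ 2 f s) (hs : IsOpen s) (ha : a ∈ s) :
    DifferentiableAt ℝ (deriv f) a :=
  ((hf.deriv_of_isOpen hs (by norm_num : (1 : WithTop ℕ∞) + 1 ≤ 2)).differentiableOn
    one_ne_zero).differentiableAt (hs.mem_nhds ha)

theorem deriv_deriv_sub_of_contDiffOn {f g : ℝ → ℝ} {s : Set ℝ} {a : ℝ}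
    (hf : ContDiffOn ℝ 2 f s) (hg : ContDiffOn ℝ 2 g s) (hs : IsOpen s) (ha : a ∈ s) :
    deriv (deriv fun x => f x - g x) a = deriv (deriv f) a - deriv (deriv g) a := by
  have hderiv : deriv (fun x => f x - g x) =ᶠ[𝓝 a] fun x => deriv f x - deriv g x := by
    filter_upwards [hf.eventually_differentiableAt hs ha, hg.eventually_differentiableAt hs ha]
      with x hfx hgx using deriv_fun_sub hfx hgx
  rw [hderiv.deriv_eq, deriv_fun_sub (hf.differentiableAt_deriv hs ha)
    (hg.differentiableAt_deriv hs ha)]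

theorem deriv_deriv_add_of_contDiffOn {f g : ℝ → ℝ} {s : Set ℝ} {a : ℝ}
    (hf : ContDiffOn ℝ 2 f s) (hg : ContDiffOn ℝ 2 g s) (hs : IsOpen s) (ha : a ∈ s) :
    deriv (deriv fun x => f x + g x) a = deriv (deriv f) a + deriv (deriv g) a := by
  have hderiv : deriv (fun x => f x + g x) =ᶠ[𝓝 a] fun x => deriv f x + deriv g x := by
    filter_upwards [hf.eventually_differentiableAt hs ha, hg.eventually_differentiableAt hs ha]
      with x hfx hgx using deriv_fun_add hfx hgx
  rw [hderiv.deriv_eq, deriv_fun_add (hf.differentiableAt_deriv hs ha)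
    (hg.differentiableAt_deriv hs ha)]

theorem IsLocalMax.deriv_deriv_le_of_sub {f g : ℝ → ℝ} {s : Set ℝ} {a : ℝ}
    (h : IsLocalMax (fun x => f x - g x) a)
    (hf : ContDiffOn ℝ 2 f s) (hg : ContDiffOn ℝ 2 g s) (hs : IsOpen s) (ha : a ∈ s) :
    deriv (deriv f) a ≤ deriv (deriv g) a := by
  have hc : ContinuousAt (fun x => f x - g x) a :=
    ((hf.sub hg).continuousOn.continuousAt (hs.mem_nhds ha))
  have := h.deriv_deriv_nonpos hc
  rw [deriv_deriv_sub_of_contDiffOn hf hg hs ha] at this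
  linarith

theorem deriv_deriv_rpow_const (p x : ℝ) :
    deriv (deriv fun z : ℝ => z ^ p) x = p * (p - 1) * x ^ (p - 2) := by
  simpa [descPochhammer_succ_right, sub_eq_add_neg, ← one_add_one_eq_two] using
    iter_deriv_rpow_const p x 2

theorem contDiffOn_rpow_const_Ioi (p : ℝ) : ContDiffOn ℝ 2 (fun z : ℝ => z ^ p) (Ioi 0) :=
  fun _ hz => (Real.contDiffAt_rpow_const_of_ne (ne_of_gt hz)).contDiffWithinAt

theorem deriv_deriv_rpow_add_rpow_one_sub (l : ℝ) {x : ℝ} (hx : 0 < x) :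
    deriv (deriv fun z : ℝ => z ^ l + z ^ (1 - l)) x
      = l * (l - 1) / x ^ 2 * (x ^ l + x ^ (1 - l)) := by
  rw [deriv_deriv_add_of_contDiffOn (contDiffOn_rpow_const_Ioi l)
    (contDiffOn_rpow_const_Ioi (1 - l)) isOpen_Ioi hx, deriv_deriv_rpow_const,
    deriv_deriv_rpow_const]
  have h1 : x ^ (l - 2) = x ^ l / x ^ 2 := by
    rw [rpow_sub hx, rpow_two]
  have h2 : x ^ (1 - l - 2) = x ^ (1 - l) / x ^ 2 := by
    rw [rpow_sub hx, rpow_two]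
  rw [h1, h2]
  ring

theorem le_of_isLocalMax_sub_barrier {l ε x t : ℝ} {v : ℝ × ℝ → ℝ} (hl : 1 < l)
    (hx : 0 < x) (ht : 0 < t) (hreg : ContDiffOn ℝ 2 v (Ioi 0 ×ˢ Ioi 0))
    (hsub : l * (l - 1) / x ^ 2 * v (x, t)
      ≤ deriv (deriv fun s => v (x, s)) t + deriv (deriv fun z => v (z, t)) x)
    (hmax : IsLocalMax (fun p : ℝ × ℝ => v p - ε * (p.1 ^ l + p.1 ^ (1 - l) + p.2)) (x, t)) :
    v (x, t) ≤ ε * (x ^ l + x ^ (1 - l)) := by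
  have hvt : ContDiffOn ℝ 2 (fun s => v (x, s)) (Ioi 0) :=
    hreg.comp (contDiff_const.prodMk contDiff_id).contDiffOn fun _ hs => ⟨hx, hs⟩
  have hvx : ContDiffOn ℝ 2 (fun z => v (z, t)) (Ioi 0) :=
    hreg.comp (contDiff_id.prodMk contDiff_const).contDiffOn fun _ hz => ⟨hz, ht⟩
  have hbt : ContDiffOn ℝ 2 (fun s : ℝ => ε * (x ^ l + x ^ (1 - l) + s)) (Ioi 0) :=
    (contDiff_const.mul (contDiff_const.add contDiff_id)).contDiffOn
  have hbx : ContDiffOn ℝ 2 (fun z : ℝ => ε * (z ^ l + z ^ (1 - l) + t)) (Ioi 0) :=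
    contDiffOn_const.mul (((contDiffOn_rpow_const_Ioi l).add
      (contDiffOn_rpow_const_Ioi (1 - l))).add contDiffOn_const)
  have hTT : deriv (deriv fun s => v (x, s)) t ≤ 0 := by
    have := (hmax.comp_continuous (g := fun s : ℝ => (x, s)) (by fun_prop)).deriv_deriv_le_of_sub
      hvt hbt isOpen_Ioi ht
    simpa using this
  have hXX : deriv (deriv fun z => v (z, t)) x
      ≤ ε * (l * (l - 1) / x ^ 2 * (x ^ l + x ^ (1 - l))) := by
    have := (hmax.comp_continuous (g := fun z : ℝ => (z, t)) (by fun_prop)).deriv_deriv_le_of_sub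
      hvx hbx isOpen_Ioi hx
    simpa only [deriv_const_mul_field', deriv_add_const',
      deriv_deriv_rpow_add_rpow_one_sub l hx] using this
  have hc : 0 < l * (l - 1) / x ^ 2 := by
    have : 0 < l - 1 := by linarith
    positivity
  have := hsub.trans (add_le_add hTT hXX)
  exact le_of_mul_le_mul_left (by linear_combination this) hc

theorem le_mul_barrier_of_subsolution {l ε M : ℝ} {v : ℝ × ℝ → ℝ} (hl : 1 < l) (hε : 0 < ε)
    (hbdd : ∀ p ∈ Ioi (0:ℝ) ×ˢ Ici (0:ℝ), v p ≤ M)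
    (hcont : ContinuousOn v (Ioi (0:ℝ) ×ˢ Ici (0:ℝ)))
    (hreg : ContDiffOn ℝ 2 v (Ioi (0:ℝ) ×ˢ Ioi (0:ℝ)))
    (hsub : ∀ x t : ℝ, 0 < x → 0 < t → l * (l - 1) / x ^ 2 * v (x, t)
      ≤ deriv (deriv fun s => v (x, s)) t + deriv (deriv fun z => v (z, t)) x)
    (h0 : ∀ x : ℝ, 0 < x → v (x, 0) ≤ 0) {x₀ t₀ : ℝ} (hx₀ : 0 < x₀) (ht₀ : 0 ≤ t₀) :
    v (x₀, t₀) ≤ ε * (x₀ ^ l + x₀ ^ (1 - l) + t₀) := by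
  -- the rectangle `[a, A] × [0, T]` around `(x₀, t₀)` is chosen so that `v - εw < 0` on the sides
  -- `x = a`, `x = A`, `t = T`
  obtain ⟨a, haM, ha, hax⟩ : ∃ a, M < ε * a ^ (1 - l) ∧ a ∈ Ioc 0 x₀ :=
    ((((tendsto_rpow_neg_nhdsGT_zero (by linarith)).const_mul_atTop hε).eventually_gt_atTop
      M).and (Ioc_mem_nhdsGT hx₀)).exists
  obtain ⟨A, hAM, hxA⟩ : ∃ A, M < ε * A ^ l ∧ x₀ ≤ A :=
    ((((tendsto_rpow_atTop (by linarith)).const_mul_atTop hε).eventually_gt_atTop M).and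
      (eventually_ge_atTop x₀)).exists
  obtain ⟨T, hTM, htT⟩ : ∃ T, M < ε * T ∧ t₀ ≤ T :=
    (((tendsto_id.const_mul_atTop hε).eventually_gt_atTop M).and (eventually_ge_atTop t₀)).exists
  set K := Icc a A ×ˢ Icc (0:ℝ) T
  set u : ℝ × ℝ → ℝ := fun p => v p - ε * (p.1 ^ l + p.1 ^ (1 - l) + p.2)
  have hKsub : K ⊆ Ioi 0 ×ˢ Ici 0 := fun p hp => ⟨ha.trans_le hp.1.1, hp.2.1⟩
  have hu : ContinuousOn u K := by
    refine (hcont.mono hKsub).sub (continuousOn_const.mul ?_)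
    have hne : ∀ p ∈ K, p.1 ≠ 0 := fun p hp => (ha.trans_le hp.1.1).ne'
    exact ((continuous_fst.continuousOn.rpow_const fun p hp => Or.inl (hne p hp)).add
      (continuous_fst.continuousOn.rpow_const fun p hp => Or.inl (hne p hp))).add
      continuous_snd.continuousOn
  have hp₀ : (x₀, t₀) ∈ K := ⟨⟨hax, hxA⟩, ⟨ht₀, htT⟩⟩
  obtain ⟨⟨x, t⟩, ⟨⟨hax', hxA'⟩, ⟨ht0, htT'⟩⟩, hmaxK⟩ :=
    (isCompact_Icc.prod isCompact_Icc).exists_isMaxOn ⟨_, hp₀⟩ hu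
  suffices hut : u (x, t) ≤ 0 from sub_nonpos.1 ((hmaxK hp₀).trans hut)
  by_contra! hpos
  have hx : 0 < x := ha.trans_le hax'
  have hvM : v (x, t) ≤ M := hbdd _ ⟨hx, ht0⟩
  have hεxl : 0 < ε * x ^ l := mul_pos hε (rpow_pos_of_pos hx l)
  have hεxl' : 0 < ε * x ^ (1 - l) := mul_pos hε (rpow_pos_of_pos hx (1 - l))
  have hεt : 0 ≤ ε * t := mul_nonneg hε.le ht0
  have hut : u (x, t) = v (x, t) - ε * x ^ l - ε * x ^ (1 - l) - ε * t := by
    simp only [u]; ring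
  have hint : (x, t) ∈ Ioo a A ×ˢ Ioo (0:ℝ) T := by
    refine ⟨⟨hax'.lt_of_ne ?_, hxA'.lt_of_ne ?_⟩, ⟨ht0.lt_of_ne ?_, htT'.lt_of_ne ?_⟩⟩
    all_goals rintro rfl
    · linarith
    · linarith
    · linarith [h0 x hx]
    · linarith
  have hmax : IsLocalMax u (x, t) :=
    hmaxK.isLocalMax (mem_of_superset ((isOpen_Ioo.prod isOpen_Ioo).mem_nhds hint)
      (prod_mono Ioo_subset_Icc_self Ioo_subset_Icc_self))
  have := le_of_isLocalMax_sub_barrier hl hx hint.2.1 hreg (hsub x t hx hint.2.1) hmax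
  linarith [mul_pos hε hint.2.1]

theorem nonpos_of_forall_pos_le_mul {a C : ℝ} (h : ∀ ε > 0, a ≤ ε * C) : a ≤ 0 := by
  have hlim : Tendsto (fun ε => ε * C) (𝓝[>] 0) (𝓝 0) :=
    ((continuous_mul_const C).tendsto' 0 0 (zero_mul C)).mono_left nhdsWithin_le_nhds
  exact ge_of_tendsto hlim (eventually_nhdsWithin_of_forall h)

/-- Uniqueness for λ-harmonic functions, `λ > 1`: a bounded continuous function on
`(0,∞) × [0,∞)`, λ-harmonic on `(0,∞) × (0,∞)` and vanishing on `t = 0`, vanishes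
identically. -/
theorem statement11 (l : ℝ) (hl : 1 < l) (v : ℝ × ℝ → ℝ)
    (hbdd : ∃ M, ∀ p ∈ Ioi (0:ℝ) ×ˢ Ici (0:ℝ), |v p| ≤ M)
    (hcont : ContinuousOn v (Ioi (0:ℝ) ×ˢ Ici (0:ℝ)))
    (hreg : ContDiffOn ℝ 2 v (Ioi (0:ℝ) ×ˢ Ioi (0:ℝ)))
    (hpde : ∀ x t : ℝ, 0 < x → 0 < t →
      deriv (deriv (fun s => v (x, s))) t + deriv (deriv (fun z => v (z, t))) x
        - l * (l - 1) / x ^ 2 * v (x, t) = 0)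
    (h0 : ∀ x : ℝ, 0 < x → v (x, 0) = 0) :
    ∀ p ∈ Ioi (0:ℝ) ×ˢ Ici (0:ℝ), v p = 0 := by
  obtain ⟨M, hM⟩ := hbdd
  rintro ⟨x, t⟩ ⟨hx, ht⟩
  have hle := fun ε (hε : 0 < ε) => le_mul_barrier_of_subsolution hl hε
    (fun p hp => (le_abs_self _).trans (hM p hp)) hcont hreg
    (fun x t hx ht => (sub_eq_zero.1 (hpde x t hx ht)).symm.le) (fun x hx => (h0 x hx).le) hx ht
  have hge := fun ε (hε : 0 < ε) => le_mul_barrier_of_subsolution (v := fun p => -v p) hl hε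
    (fun p hp => (neg_le_abs _).trans (hM p hp)) hcont.neg hreg.neg
    (fun x t hx ht => by simp only [deriv.fun_neg']; linarith [hpde x t hx ht])
    (fun x hx => by simp [h0 x hx]) hx ht
  exact le_antisymm (nonpos_of_forall_pos_le_mul hle)
    (neg_nonpos.1 (nonpos_of_forall_pos_le_mul hge))
end

section
/- There exists C > 0 (depending on λ > 0) such that for all θ ∈ (0, π/2) and x, y, t ∈ (0,∞): |(sin θ)^{2λ−1}/((x−y)²+t²+2xy(1−cos θ))^{λ+2} − θ^{2λ−1}/((x−y)²+t²+xyθ²)^{λ+2}| ≤ C θ^{2λ+1}/((x−y)²+t²+xyθ²)^{λ+2}. -/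
/-!
With `D = (x-y)² + t² + xyθ²` and `E = (x-y)² + t² + 2xy(1 - cos θ)`, put `u = sin θ / θ` and
`v = E / D`. Then `sin θ ^ p / E ^ q - θ ^ p / D ^ q = θ ^ p / D ^ q * (u ^ p * v ^ (-q) - 1)`.
Jordan's inequality and `cos θ ≤ 1 - 2θ²/π²` keep `u, v` in `[4/π², 1]`, and the Taylor bounds
`θ - sin θ ≤ θ³/6`, `θ² - 2(1 - cos θ) ≤ θ⁴/12` (the latter with `xyθ² ≤ D`) give
`1 - u, 1 - v ≤ θ²`. On `[a, 1]²` with `a > 0` the map `(u, v) ↦ u ^ p * v ^ r` is Lipschitz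
(mean value theorem), so the bracket is `O(θ²)`.
-/

open Real Set

section RpowNearOne

variable {a u : ℝ}

lemma rpow_le_max_rpow_one (ha : 0 < a) (hau : a ≤ u) (hu : u ≤ 1) (r : ℝ) :
    u ^ r ≤ max (a ^ r) 1 := by
  rcases le_total 0 r with hr | hr
  · exact (rpow_le_one (ha.le.trans hau) hu hr).trans (le_max_right _ _)
  · exact (rpow_le_rpow_of_nonpos ha hau hr).trans (le_max_left _ _)

lemma abs_rpow_sub_one_le (ha : 0 < a) (hau : a ≤ u) (hu : u ≤ 1) (r : ℝ) :
    |u ^ r - 1| ≤ |r| * max (a ^ (r - 1)) 1 * (1 - u) := by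
  have hderiv : ∀ s ∈ Icc u 1, HasDerivWithinAt (fun s : ℝ => s ^ r) (r * s ^ (r - 1)) (Icc u 1) s :=
    fun s hs => (hasDerivAt_rpow_const (Or.inl (ha.trans_le (hau.trans hs.1)).ne')).hasDerivWithinAt
  have hbound : ∀ s ∈ Ico u 1, ‖r * s ^ (r - 1)‖ ≤ |r| * max (a ^ (r - 1)) 1 := by
    intro s hs
    have hs0 : 0 < s := ha.trans_le (hau.trans hs.1)
    rw [Real.norm_eq_abs, abs_mul, abs_of_pos (rpow_pos_of_pos hs0 _)]
    exact mul_le_mul_of_nonneg_left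
      (rpow_le_max_rpow_one ha (hau.trans hs.1) hs.2.le _) (abs_nonneg r)
  have := norm_image_sub_le_of_norm_deriv_le_segment' hderiv hbound 1 ⟨hu, le_rfl⟩
  rwa [one_rpow, Real.norm_eq_abs, abs_sub_comm] at this

lemma exists_abs_rpow_mul_rpow_sub_one_le (ha : 0 < a) (p r : ℝ) :
    ∃ K > 0, ∀ u v : ℝ, a ≤ u → u ≤ 1 → a ≤ v → v ≤ 1 →
      |u ^ p * v ^ r - 1| ≤ K * max (1 - u) (1 - v) := by
  set Kp := |p| * max (a ^ (p - 1)) 1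
  set Kr := |r| * max (a ^ (r - 1)) 1
  set Mr := max (a ^ r) 1
  have hKp : 0 ≤ Kp := by positivity
  have hKr : 0 ≤ Kr := by positivity
  refine ⟨Kp * Mr + Kr + 1, by positivity, fun u v hau hu hav hv => ?_⟩
  have hv0 : 0 ≤ v ^ r := rpow_nonneg (ha.le.trans hav) r
  have hu' : 1 - u ≤ max (1 - u) (1 - v) := le_max_left _ _
  have hv' : 1 - v ≤ max (1 - u) (1 - v) := le_max_right _ _
  have hmax : 0 ≤ max (1 - u) (1 - v) := hv'.trans' (by linarith)
  calc |u ^ p * v ^ r - 1| = |(u ^ p - 1) * v ^ r + (v ^ r - 1)| := by ring_nf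
    _ ≤ |u ^ p - 1| * v ^ r + |v ^ r - 1| := by
        rw [← abs_of_nonneg hv0, ← abs_mul, abs_of_nonneg hv0]; exact abs_add_le _ _
    _ ≤ Kp * (1 - u) * Mr + Kr * (1 - v) := by
        gcongr
        · exact abs_rpow_sub_one_le ha hau hu p
        · exact rpow_le_max_rpow_one ha hav hv r
        · exact abs_rpow_sub_one_le ha hav hv r
    _ ≤ Kp * max (1 - u) (1 - v) * Mr + Kr * max (1 - u) (1 - v) := by gcongr
    _ ≤ (Kp * Mr + Kr + 1) * max (1 - u) (1 - v) := by nlinarith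

end RpowNearOne

lemma rpow_div_rpow_sub_rpow_div_rpow {s θ E D : ℝ} (hs : 0 ≤ s) (hθ : 0 < θ) (hE : 0 ≤ E)
    (hD : 0 < D) (p q : ℝ) :
    s ^ p / E ^ q - θ ^ p / D ^ q = θ ^ p / D ^ q * ((s / θ) ^ p * (E / D) ^ (-q) - 1) := by
  have hθp : θ ^ p ≠ 0 := (rpow_pos_of_pos hθ p).ne'
  have hDq : D ^ q ≠ 0 := (rpow_pos_of_pos hD q).ne'
  rw [div_rpow hs hθ.le, rpow_neg (div_nonneg hE hD.le), div_rpow hE hD.le]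
  field_simp

lemma four_div_pi_sq_le_sin_div_self {θ : ℝ} (h0 : 0 < θ) (h1 : θ ≤ π / 2) :
    4 / π ^ 2 ≤ sin θ / θ := by
  have h2 : 4 / π ^ 2 ≤ 2 / π := by
    rw [div_le_div_iff₀ (by positivity) pi_pos]; nlinarith [pi_gt_three]
  exact h2.trans ((le_div_iff₀ h0).2 (mul_le_sin h0.le h1))

lemma sin_div_self_le_one {θ : ℝ} (h0 : 0 < θ) : sin θ / θ ≤ 1 :=
  (div_le_one h0).2 (sin_le h0.le)

lemma one_sub_sin_div_self_le {θ : ℝ} (h0 : 0 < θ) : 1 - sin θ / θ ≤ θ ^ 2 / 6 := by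
  have := sin_ge_sub_cube h0.le
  rw [sub_le_iff_le_add, ← sub_le_iff_le_add', le_div_iff₀ h0]
  nlinarith

lemma sq_sub_sin_sq_le (x : ℝ) : x ^ 2 - sin x ^ 2 ≤ x ^ 4 / 3 := by
  have h1 := abs_sub_sin_le x
  have h2 : |x + sin x| ≤ 2 * |x| := (abs_add_le _ _).trans (by linarith [abs_sin_le_abs (x := x)])
  calc x ^ 2 - sin x ^ 2 ≤ |x - sin x| * |x + sin x| := by
        rw [← abs_mul]; exact (le_abs_self _).trans_eq' (by ring)
    _ ≤ |x| ^ 3 / 6 * (2 * |x|) := by gcongr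
    _ = x ^ 4 / 3 := by rw [← Even.pow_abs (by decide : Even 4)]; ring

-- `2 (1 - cos θ) = 4 sin² (θ / 2)`
lemma sq_sub_two_mul_one_sub_cos_le (θ : ℝ) : θ ^ 2 - 2 * (1 - cos θ) ≤ θ ^ 4 / 12 := by
  have h := sq_sub_sin_sq_le (θ / 2)
  have := sin_sq_eq_half_sub (θ / 2)
  rw [show 2 * (θ / 2) = θ by ring] at this
  nlinarith

section CosDenominator

variable {A x y θ : ℝ}

lemma cos_denom_div_le_one (hA : 0 ≤ A) (hxy : 0 ≤ x * y) :
    (A + 2 * x * y * (1 - cos θ)) / (A + x * y * θ ^ 2) ≤ 1 := by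
  have := one_sub_sq_div_two_le_cos (x := θ)
  refine div_le_one_of_le₀ ?_ (by positivity)
  nlinarith [mul_nonneg hxy (sub_nonneg.2 this)]

lemma four_div_pi_sq_le_cos_denom_div (hA : 0 ≤ A) (hxy : 0 ≤ x * y)
    (hpos : 0 < A + x * y * θ ^ 2) (hθ : |θ| ≤ π) :
    4 / π ^ 2 ≤ (A + 2 * x * y * (1 - cos θ)) / (A + x * y * θ ^ 2) := by
  have hcos : 4 / π ^ 2 * (x * y * θ ^ 2) ≤ 2 * x * y * (1 - cos θ) := by
    have := mul_le_mul_of_nonneg_left (cos_le_one_sub_mul_cos_sq hθ) hxy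
    linear_combination 2 * this
  have hπ : 4 / π ^ 2 ≤ 1 := (div_le_one (by positivity)).2 (by nlinarith [pi_gt_three])
  rw [le_div_iff₀ hpos]
  nlinarith [mul_nonneg (sub_nonneg.2 hπ) hA]

lemma one_sub_cos_denom_div_le (hA : 0 ≤ A) (hxy : 0 ≤ x * y) (hpos : 0 < A + x * y * θ ^ 2) :
    1 - (A + 2 * x * y * (1 - cos θ)) / (A + x * y * θ ^ 2) ≤ θ ^ 2 / 12 := by
  have := mul_le_mul_of_nonneg_left (sq_sub_two_mul_one_sub_cos_le θ) hxy
  rw [one_sub_div hpos.ne', div_le_iff₀ hpos]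
  nlinarith [mul_nonneg hA (sq_nonneg θ)]

end CosDenominator

theorem statement15_general (l : ℝ) :
    ∃ C > 0, ∀ θ x y t : ℝ, θ ∈ Ioo 0 (π / 2) → 0 < x → 0 < y → 0 < t →
      |Real.sin θ ^ (2 * l - 1) /
          ((x - y) ^ 2 + t ^ 2 + 2 * x * y * (1 - Real.cos θ)) ^ (l + 2)
        - θ ^ (2 * l - 1) / ((x - y) ^ 2 + t ^ 2 + x * y * θ ^ 2) ^ (l + 2)|
      ≤ C * θ ^ (2 * l + 1) / ((x - y) ^ 2 + t ^ 2 + x * y * θ ^ 2) ^ (l + 2) := by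
  obtain ⟨K, hK, hbound⟩ :=
    exists_abs_rpow_mul_rpow_sub_one_le (a := 4 / π ^ 2) (by positivity) (2 * l - 1) (-(l + 2))
  refine ⟨K, hK, fun θ x y t ⟨hθ0, hθ1⟩ hx hy _ => ?_⟩
  have hA : 0 ≤ (x - y) ^ 2 + t ^ 2 := by positivity
  have hxy : 0 ≤ x * y := by positivity
  have hD : 0 < (x - y) ^ 2 + t ^ 2 + x * y * θ ^ 2 := by positivity
  have hθπ : |θ| ≤ π := by rw [abs_of_pos hθ0]; linarith [pi_pos]
  have hclose := hbound _ _ (four_div_pi_sq_le_sin_div_self hθ0 hθ1.le) (sin_div_self_le_one hθ0)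
    (four_div_pi_sq_le_cos_denom_div hA hxy hD hθπ) (cos_denom_div_le_one hA hxy)
  have hmax : max (1 - sin θ / θ) (1 - ((x - y) ^ 2 + t ^ 2 + 2 * x * y * (1 - cos θ)) /
      ((x - y) ^ 2 + t ^ 2 + x * y * θ ^ 2)) ≤ θ ^ 2 :=
    max_le (by linarith [one_sub_sin_div_self_le hθ0, sq_nonneg θ])
      (by linarith [one_sub_cos_denom_div_le hA hxy hD, sq_nonneg θ])
  have hE : 0 ≤ (x - y) ^ 2 + t ^ 2 + 2 * x * y * (1 - cos θ) :=
    add_nonneg hA (mul_nonneg (by positivity) (sub_nonneg.2 (cos_le_one θ)))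
  rw [rpow_div_rpow_sub_rpow_div_rpow (sin_pos_of_pos_of_lt_pi hθ0 (by linarith)).le hθ0 hE hD,
    abs_mul, abs_of_nonneg (by positivity)]
  calc _ ≤ θ ^ (2 * l - 1) / ((x - y) ^ 2 + t ^ 2 + x * y * θ ^ 2) ^ (l + 2) * (K * θ ^ 2) := by
        gcongr; exact hclose.trans (by gcongr)
    _ = _ := by
        rw [show 2 * l + 1 = 2 * l - 1 + (2 : ℕ) by push_cast; ring, rpow_add_natCast hθ0.ne']
        ring

/-- Comparison of the exact and the approximate kernels: for `θ ∈ (0, π/2)`,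
`|sinθ^{2λ-1}/((x-y)²+t²+2xy(1-cosθ))^{λ+2} − θ^{2λ-1}/((x-y)²+t²+xyθ²)^{λ+2}|
  ≤ C θ^{2λ+1}/((x-y)²+t²+xyθ²)^{λ+2}`. -/
theorem statement15 (l : ℝ) (hl : 0 < l) :
    ∃ C > 0, ∀ θ x y t : ℝ, θ ∈ Ioo 0 (π / 2) → 0 < x → 0 < y → 0 < t →
      |Real.sin θ ^ (2 * l - 1) /
          ((x - y) ^ 2 + t ^ 2 + 2 * x * y * (1 - Real.cos θ)) ^ (l + 2)
        - θ ^ (2 * l - 1) / ((x - y) ^ 2 + t ^ 2 + x * y * θ ^ 2) ^ (l + 2)|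
      ≤ C * θ ^ (2 * l + 1) / ((x - y) ^ 2 + t ^ 2 + x * y * θ ^ 2) ^ (l + 2) :=
  statement15_general l
end
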